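/- arXiv:2211.11834 — 7 statements merged into one kernel-verified Lean document; each statement's English description precedes it below -/
import Mathlib

section
/- Let k be a field of characteristic zero, let R be a k-algebra, let M be a simple R-module that is finite-dimensional as a k-vector space, and let N be an R-module that is finite-dimensional as a k-vector space. If tr_M(x) = tr_N(x) for every x ∈ R, then N is a simple R-module and N is isomorphic to M as an R-module. -/
/-!
Every element of the annihilator `I` of `M` acts on `N` with traceless powers, since for `x ∈ I`
also `x ^ i ∈ I` acts by zero on `M`. In characteristic zero an endomorphism all of whose powers
are traceless is nilpotent, so by Engel's theorem some `n ≠ 0` in `N` is killed by `I`. Then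
`r ↦ r • n` factors through `R ⧸ I`, which embeds in the semisimple module `M ^ dim M`; extending
the factored map to `M ^ dim M` and restricting to a factor gives a nonzero map `M → N`. By Schur
it is injective, and it is bijective because `tr(1)` shows `dim M = dim N`.
-/

noncomputable def traceOfSMul (k : Type*) {R M : Type*} [Field k] [Ring R] [Algebra k R]
    [AddCommGroup M] [Module k M] [Module R M] [IsScalarTower k R M] (x : R) : k :=
  LinearMap.trace k M (DistribMulAction.toLinearMap k M x)

open Polynomial LinearMap

theorem traceOfSMul_eq_trace_lsmul (k : Type*) {R M : Type*} [Field k] [Ring R] [Algebra k R]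
    [AddCommGroup M] [Module k M] [Module R M] [IsScalarTower k R M] (x : R) :
    traceOfSMul k (M := M) x = trace k M (Algebra.lsmul k k M x) :=
  rfl

theorem LinearMap.trace_mul_aeval_eq_zero {R M : Type*} [CommRing R] [AddCommGroup M]
    [Module R M] {f : Module.End R M} (hf : ∀ i ≠ 0, trace R M (f ^ i) = 0) (p : R[X]) :
    trace R M (f * aeval f p) = 0 := by
  induction p using Polynomial.induction_on' with
  | add p q hp hq => rw [map_add, mul_add, map_add, hp, hq, add_zero]
  | monomial n c =>
    rw [aeval_monomial, Algebra.algebraMap_eq_smul_one, smul_mul_assoc, one_mul, mul_smul_comm,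
      ← pow_succ', map_smul, hf _ n.succ_ne_zero, smul_zero]

theorem LinearMap.isNilpotent_of_forall_trace_pow_eq_zero {k V : Type*} [Field k] [CharZero k]
    [AddCommGroup V] [Module k V] [FiniteDimensional k V] {f : Module.End k V}
    (hf : ∀ i ≠ 0, trace k V (f ^ i) = 0) : IsNilpotent f := by
  obtain ⟨g, hχ, hXg⟩ := f.charpoly.exists_eq_pow_rootMultiplicity_mul_and_not_dvd
    f.charpoly_monic.ne_zero 0
  set r := f.charpoly.rootMultiplicity 0
  rw [C_0, sub_zero] at hχ hXg
  obtain ⟨a, b, hab⟩ := ((irreducible_X.coprime_iff_not_dvd).mpr hXg).pow_left (m := r + 1)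
  have hann : aeval f (X ^ (r + 1) * g) = 0 := by
    rw [pow_succ', mul_assoc, ← hχ, map_mul, aeval_self_charpoly, mul_zero]
  -- `a(f) f ^ (r + 1)` is the projection onto the part of `V` where `f` is invertible, along the
  -- part where `f` is nilpotent; it is a multiple of `f`, hence traceless, hence zero.
  have hcompl : aeval f (a * X ^ (r + 1)) = 1 - aeval f (b * g) := by
    rw [eq_sub_iff_add_eq, ← map_add, hab, map_one]
  have he : IsIdempotentElem (aeval f (a * X ^ (r + 1))) := by
    unfold IsIdempotentElem
    nth_rewrite 2 [hcompl]
    rw [mul_sub, mul_one, ← map_mul,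
      show a * X ^ (r + 1) * (b * g) = a * b * (X ^ (r + 1) * g) by ring, map_mul _ (a * b), hann,
      mul_zero, sub_zero]
  have htr : trace k V (aeval f (a * X ^ (r + 1))) = 0 := by
    rw [pow_succ', mul_left_comm, map_mul, aeval_X]
    exact trace_mul_aeval_eq_zero hf _
  refine ⟨r + 1, ?_⟩
  calc f ^ (r + 1)
        = aeval f (X ^ (r + 1) : k[X]) * (aeval f (a * X ^ (r + 1)) + aeval f (b * g)) := by
        rw [← map_add, hab, map_one, mul_one, map_pow, aeval_X]
    _ = 0 := by
        rw [he.eq_zero_of_trace_eq_zero htr, zero_add, ← map_mul, mul_left_comm, map_mul, hann,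
          mul_zero]

theorem Ideal.isNilpotent_lsmul_of_forall_trace_eq_zero {k R N : Type*} [Field k] [CharZero k]
    [Ring R] [Algebra k R] [AddCommGroup N] [Module k N] [Module R N] [IsScalarTower k R N]
    [FiniteDimensional k N] {I : Ideal R} (hI : ∀ x ∈ I, trace k N (Algebra.lsmul k k N x) = 0)
    {x : R} (hx : x ∈ I) : IsNilpotent (Algebra.lsmul k k N x) := by
  refine isNilpotent_of_forall_trace_pow_eq_zero fun i hi ↦ ?_
  obtain ⟨j, rfl⟩ := Nat.exists_eq_succ_of_ne_zero hi
  rw [← map_pow]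
  exact hI _ (pow_succ x j ▸ I.mul_mem_left _ hx)

section Engel

attribute [local instance] LieRing.ofAssociativeRing

theorem Ideal.exists_ne_zero_forall_smul_eq_zero {k R N : Type*} [CommRing k] [Ring R]
    [Algebra k R] [AddCommGroup N] [Module k N] [Module R N] [IsScalarTower k R N]
    [IsNoetherian k N] [Nontrivial N] (I : Ideal R)
    (hI : ∀ x ∈ I, IsNilpotent (Algebra.lsmul k k N x)) :
    ∃ n : N, n ≠ 0 ∧ ∀ x ∈ I, x • n = 0 := by
  let L : LieSubalgebra k (Module.End k N) :=
    { (I.restrictScalars k).map (Algebra.lsmul k k N).toLinearMap with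
      lie_mem' := by
        rintro _ _ ⟨x, hx, rfl⟩ ⟨y, hy, rfl⟩
        refine ⟨x * y - y * x, I.sub_mem (I.mul_mem_left x hy) (I.mul_mem_left y hx), ?_⟩
        simp [Ring.lie_def] }
  have : LieModule.IsNilpotent L N := by
    refine (LieModule.isNilpotent_iff_forall' (R := k)).mpr ?_
    rintro ⟨_, x, hx, rfl⟩
    exact hI x hx
  have := LieModule.nontrivial_max_triv_of_isNilpotent k L N
  obtain ⟨⟨n, hn⟩, hne⟩ := exists_ne (0 : LieModule.maxTrivSubmodule k L N)
  refine ⟨n, fun h ↦ hne (by simp [h]), fun x hx ↦ ?_⟩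
  exact (LieModule.mem_maxTrivSubmodule k L N n).mp hn ⟨_, x, hx, rfl⟩

end Engel

theorem IsSemisimpleModule.exists_comp_eq_of_ker_le {R A P N : Type*} [Ring R]
    [AddCommGroup A] [Module R A] [AddCommGroup P] [Module R P] [IsSemisimpleModule R P]
    [AddCommGroup N] [Module R N] (f : A →ₗ[R] P) (g : A →ₗ[R] N) (h : ker f ≤ ker g) :
    ∃ g' : P →ₗ[R] N, g' ∘ₗ f = g := by
  obtain ⟨q, hq⟩ := exists_isCompl (range f)
  refine ⟨(ker f).liftQ g h ∘ₗ f.quotKerEquivRange.symm.toLinearMap ∘ₗ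
    Submodule.projectionOnto _ q hq, LinearMap.ext fun a ↦ ?_⟩
  have : f.quotKerEquivRange.symm ⟨f a, mem_range_self f a⟩ = Submodule.Quotient.mk a :=
    f.quotKerEquivRange.symm_apply_eq.mpr rfl
  simp [Submodule.projectionOnto_apply_left hq ⟨f a, mem_range_self f a⟩, this]

theorem exists_linearMap_ne_zero_of_annihilator_smul_eq_zero {k R M N : Type*} [Field k] [Ring R]
    [Algebra k R] [AddCommGroup M] [Module k M] [Module R M] [IsScalarTower k R M]
    [FiniteDimensional k M] [IsSemisimpleModule R M] [AddCommGroup N] [Module R N] {n : N}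
    (hn : n ≠ 0) (h : ∀ x ∈ Module.annihilator R M, x • n = 0) : ∃ g : M →ₗ[R] N, g ≠ 0 := by
  let b := Module.finBasis k M
  let ι : R →ₗ[R] (Fin (Module.finrank k M) → M) := LinearMap.pi fun i ↦ toSpanSingleton R M (b i)
  have hker : ker ι ≤ ker (toSpanSingleton R N n) := by
    intro x hx
    refine h x (Module.mem_annihilator.mpr fun m ↦ ?_)
    have : Algebra.lsmul k k M x = 0 := b.ext fun i ↦ congr_fun hx i
    exact LinearMap.congr_fun this m
  obtain ⟨χ, hχ⟩ := IsSemisimpleModule.exists_comp_eq_of_ker_le ι _ hker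
  have hχ0 : χ ≠ 0 := by
    rintro rfl
    exact hn (by simpa using congr($hχ 1).symm)
  by_contra! hall
  exact hχ0 (LinearMap.pi_ext' fun i ↦ by simp [hall])

/-- If `M` is a simple `R`-module, finite-dimensional over a characteristic-zero
field `k`, and `N` is a finite-dimensional `R`-module with the same trace function, then `N` is
simple and isomorphic to `M`. -/
theorem simple_of_trace_eq (k R M N : Type*) [Field k] [CharZero k] [Ring R] [Algebra k R]
    [AddCommGroup M] [Module k M] [Module R M] [IsScalarTower k R M] [FiniteDimensional k M]
    [AddCommGroup N] [Module k N] [Module R N] [IsScalarTower k R N] [FiniteDimensional k N]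
    [IsSimpleModule R M]
    (h : ∀ x : R, traceOfSMul k (M := M) x = traceOfSMul k (M := N) x) :
    IsSimpleModule R N ∧ Nonempty (M ≃ₗ[R] N) := by
  have hdim : Module.finrank k M = Module.finrank k N := by
    simpa [traceOfSMul_eq_trace_lsmul] using h 1
  have := IsSimpleModule.nontrivial R M
  have : Nontrivial N := Module.nontrivial_of_finrank_pos (hdim ▸ Module.finrank_pos)
  have htrace : ∀ x ∈ Module.annihilator R M, trace k N (Algebra.lsmul k k N x) = 0 := by
    intro x hx
    have hM : Algebra.lsmul k k M x = 0 := LinearMap.ext (Module.mem_annihilator.mp hx)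
    rw [← traceOfSMul_eq_trace_lsmul, ← h, traceOfSMul_eq_trace_lsmul, hM, map_zero]
  obtain ⟨n, hn, hann⟩ := (Module.annihilator R M).exists_ne_zero_forall_smul_eq_zero (k := k)
    fun x hx ↦ Ideal.isNilpotent_lsmul_of_forall_trace_eq_zero htrace hx
  obtain ⟨g, hg⟩ := exists_linearMap_ne_zero_of_annihilator_smul_eq_zero (k := k) hn hann
  have hinj := g.injective_of_ne_zero hg
  let e := LinearEquiv.ofBijective g
    ⟨hinj, (injective_iff_surjective_of_finrank_eq_finrank hdim (f := g.restrictScalars k)).mp hinj⟩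
  exact ⟨IsSimpleModule.congr e.symm, ⟨e⟩⟩
end

section
/- Let k be a field of characteristic zero, let R be a k-algebra, and let M and N be semisimple R-modules that are finite-dimensional as k-vector spaces. If tr_M(x) = tr_N(x) for every x ∈ R, then M and N are isomorphic as R-modules. -/
/-!
Fix a simple module `S`. The `S`-isotypic component of the semisimple module `M × N` has a
complement that is also fully invariant, so the projection onto it along that complement commutes
with every endomorphism, and by the Jacobson density theorem it is the action of some `r : R`.
This `r` acts on `M` and on `N` as a projection onto their `S`-isotypic components, so its traces
there are the dimensions of these components; in characteristic zero, equal traces thus give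
isotypic components of equal dimension. In particular every simple submodule of `M` also occurs
in `N`. Splitting off one copy on both sides keeps the traces equal and lowers the dimension, and
induction on `dim M` concludes.
-/

open Module Submodule Function

section Trace

variable (k : Type*) {R M N : Type*} [Field k] [Ring R] [Algebra k R]
  [AddCommGroup M] [Module k M] [Module R M] [IsScalarTower k R M]
  [AddCommGroup N] [Module k N] [Module R N] [IsScalarTower k R N]

instance Submodule.finiteDimensional_of_isScalarTower [FiniteDimensional k M]
    (p : Submodule R M) : FiniteDimensional k p :=
  .of_injective (p.subtype.restrictScalars k) p.injective_subtype

theorem Submodule.finrank_add_finrank_of_isCompl [FiniteDimensional k M] {p q : Submodule R M}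
    (h : IsCompl p q) : finrank k p + finrank k q = finrank k M := by
  rw [← finrank_prod, ((prodEquivOfIsCompl p q h).restrictScalars k).finrank_eq]

theorem traceOfSMul_def (x : R) :
    traceOfSMul k (M := M) x = LinearMap.trace k M (DistribSMul.toLinearMap k M x) :=
  rfl

theorem traceOfSMul_congr (e : M ≃ₗ[R] N) (x : R) :
    traceOfSMul k (M := M) x = traceOfSMul k (M := N) x := by
  rw [traceOfSMul_def, traceOfSMul_def, ← LinearMap.trace_conj' _ (e.restrictScalars k)]
  congr 1
  ext n
  simp [LinearEquiv.conj_apply]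

theorem traceOfSMul_prod [FiniteDimensional k M] [FiniteDimensional k N] (x : R) :
    traceOfSMul k (M := M × N) x = traceOfSMul k (M := M) x + traceOfSMul k (M := N) x :=
  LinearMap.trace_prodMap' (DistribSMul.toLinearMap k M x) (DistribSMul.toLinearMap k N x)

theorem traceOfSMul_eq_add_of_isCompl [FiniteDimensional k M] {p q : Submodule R M}
    (h : IsCompl p q) (x : R) :
    traceOfSMul k (M := M) x = traceOfSMul k (M := p) x + traceOfSMul k (M := q) x := by
  rw [← traceOfSMul_congr k (prodEquivOfIsCompl p q h), traceOfSMul_prod]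

theorem traceOfSMul_eq_finrank [FiniteDimensional k M] {p : Submodule R M} {x : R}
    (h : LinearMap.IsProj p (DistribSMul.toAddMonoidHom M x)) :
    traceOfSMul k (M := M) x = finrank k p :=
  LinearMap.IsProj.trace (p := p.restrictScalars k) ⟨h.map_mem, h.map_id⟩

theorem traceOfSMul_one [FiniteDimensional k M] :
    traceOfSMul k (M := M) (1 : R) = finrank k M := by
  rw [traceOfSMul_def, ← LinearMap.trace_one]
  congr 1
  ext
  simp

theorem finrank_eq_of_traceOfSMul_eq [CharZero k] [FiniteDimensional k M] [FiniteDimensional k N]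
    (h : ∀ x : R, traceOfSMul k (M := M) x = traceOfSMul k (M := N) x) :
    finrank k M = finrank k N :=
  Nat.cast_injective (R := k) <| by rw [← traceOfSMul_one k (R := R), h, traceOfSMul_one]

end Trace

section Isotypic

variable {R V N : Type*} [Ring R] [AddCommGroup V] [Module R V] [AddCommGroup N] [Module R N]

instance [IsSemisimpleModule R V] [IsSemisimpleModule R N] : IsSemisimpleModule R (V × N) := by
  have := IsSemisimpleModule.sup (.range (LinearMap.inl R V N)) (.range (LinearMap.inr R V N))
  rw [LinearMap.sup_range_inl_inr] at this
  exact .congr Submodule.topEquiv.symm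

-- The fully invariant submodules form a Boolean algebra: they correspond to sets of isotypic
-- components.
theorem Submodule.IsFullyInvariant.exists_isCompl [IsSemisimpleModule R V] {p : Submodule R V}
    (hp : p.IsFullyInvariant) : ∃ q : Submodule R V, IsCompl p q ∧ q.IsFullyInvariant := by
  have : ComplementedLattice (fullyInvariantSubmodule R V) :=
    OrderIso.setIsotypicComponents.complementedLattice_iff.1 inferInstance
  obtain ⟨q, hq⟩ := ComplementedLattice.exists_isCompl (⟨p, hp⟩ : fullyInvariantSubmodule R V)
  exact ⟨q, hq.map (fullyInvariantSubmodule R V).subtype, q.2⟩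

theorem Submodule.projection_comp_of_isFullyInvariant {p q : Submodule R V} (h : IsCompl p q)
    (hp : p.IsFullyInvariant) (hq : q.IsFullyInvariant) (f : End R V) :
    p.projection q h ∘ₗ f = f ∘ₗ p.projection q h := by
  ext v
  obtain ⟨a, b, rfl, -⟩ := existsUnique_add_of_isCompl h v
  simp [projection_apply_of_mem_left h (hp f a.2), projection_apply_of_mem_right h (hq f b.2)]

theorem Submodule.exists_smul_eq_projection_of_isFullyInvariant [IsSemisimpleModule R V]
    [Module.Finite (End R V) V] {p q : Submodule R V} (h : IsCompl p q)
    (hp : p.IsFullyInvariant) (hq : q.IsFullyInvariant) :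
    ∃ r : R, ∀ v, r • v = p.projection q h v := by
  let f : End (End R V) V :=
    { toFun := p.projection q h
      map_add' := map_add _
      map_smul' g v := LinearMap.congr_fun (projection_comp_of_isFullyInvariant h hp hq g) v }
  obtain ⟨r, hr⟩ := Module.Finite.toModuleEnd_moduleEnd_surjective f
  exact ⟨r, fun v => LinearMap.congr_fun hr v⟩

theorem exists_isProj_smul_isotypicComponent [IsSemisimpleModule R V] [Module.Finite (End R V) V]
    (S : Type*) [AddCommGroup S] [Module R S] [IsSimpleModule R S] :
    ∃ r : R, LinearMap.IsProj (isotypicComponent R V S) (DistribSMul.toAddMonoidHom V r) := by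
  obtain ⟨q, hq, hq_inv⟩ := (IsFullyInvariant.isotypicComponent R V S).exists_isCompl
  obtain ⟨r, hr⟩ := exists_smul_eq_projection_of_isFullyInvariant hq
    (.isotypicComponent R V S) hq_inv
  exact ⟨r, fun v => by rw [DistribSMul.toAddMonoidHom_apply, hr]; exact projection_apply_mem hq v,
    fun v hv => (hr v).trans (projection_apply_of_mem_left hq hv)⟩

theorem LinearMap.IsProj.comap_smul {f : N →ₗ[R] V} (hf : Injective f) {c : Submodule R V}
    {r : R} (h : IsProj c (DistribSMul.toAddMonoidHom V r)) :
    IsProj (c.comap f) (DistribSMul.toAddMonoidHom N r) where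
  map_mem n := by simpa using h.map_mem (f n)
  map_id n hn := hf (by simpa using h.map_id _ hn)

theorem Submodule.comap_isotypicComponent_of_injective [IsSemisimpleModule R N]
    (S : Type*) [AddCommGroup S] [Module R S] [IsSimpleModule R S] {f : N →ₗ[R] V}
    (hf : Injective f) : (isotypicComponent R V S).comap f = isotypicComponent R N S := by
  refine le_antisymm (le_isotypicComponent_iff.mpr ?_) (f.le_comap_isotypicComponent S)
  refine (IsIsotypicOfType.isotypicComponent R V S).of_injective (f.restrict fun _ hx => hx) ?_
  exact fun a b hab => Subtype.ext (hf congr(($hab : V)))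

end Isotypic

section IsotypicTrace

variable (k : Type*) {R M N : Type*} [Field k] [CharZero k] [Ring R] [Algebra k R]
  [AddCommGroup M] [Module k M] [Module R M] [IsScalarTower k R M] [FiniteDimensional k M]
  [IsSemisimpleModule R M]
  [AddCommGroup N] [Module k N] [Module R N] [IsScalarTower k R N] [FiniteDimensional k N]
  [IsSemisimpleModule R N]

theorem finrank_isotypicComponent_eq_of_traceOfSMul_eq
    (h : ∀ x : R, traceOfSMul k (M := M) x = traceOfSMul k (M := N) x)
    (S : Type*) [AddCommGroup S] [Module R S] [IsSimpleModule R S] :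
    finrank k (isotypicComponent R M S) = finrank k (isotypicComponent R N S) := by
  have : Module.Finite (End R (M × N)) (M × N) := .of_restrictScalars_finite k _ _
  obtain ⟨r, hr⟩ := exists_isProj_smul_isotypicComponent (R := R) (V := M × N) S
  have hM := traceOfSMul_eq_finrank k (hr.comap_smul LinearMap.inl_injective)
  have hN := traceOfSMul_eq_finrank k (hr.comap_smul LinearMap.inr_injective)
  rw [comap_isotypicComponent_of_injective S LinearMap.inl_injective] at hM
  rw [comap_isotypicComponent_of_injective S LinearMap.inr_injective] at hN
  exact Nat.cast_injective (R := k) (hM ▸ hN ▸ h r)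

theorem exists_submodule_linearEquiv_of_traceOfSMul_eq
    (h : ∀ x : R, traceOfSMul k (M := M) x = traceOfSMul k (M := N) x)
    (S : Submodule R M) [IsSimpleModule R S] :
    ∃ T : Submodule R N, Nonempty (S ≃ₗ[R] T) := by
  have hM : Nontrivial (isotypicComponent R M S) :=
    nontrivial_iff_ne_bot.mpr (bot_lt_isotypicComponent S).ne'
  have hN : isotypicComponent R N S ≠ ⊥ := by
    rw [← nontrivial_iff_ne_bot]
    apply Module.nontrivial_of_finrank_pos (R := k)
    rw [← finrank_isotypicComponent_eq_of_traceOfSMul_eq k h]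
    exact finrank_pos
  obtain ⟨T, hT, _⟩ := (IsSemisimpleModule.eq_bot_or_exists_simple_le _).resolve_left hN
  obtain ⟨e⟩ := isIsotypicOfType_submodule_iff.mp (.isotypicComponent R N S) T hT
  exact ⟨T, ⟨e.symm⟩⟩

end IsotypicTrace

/-- Over a characteristic-zero field `k`, two semisimple `R`-modules that are
finite-dimensional over `k` and have the same trace function are isomorphic. -/
theorem linearEquiv_of_trace_eq_of_isSemisimple (k R M N : Type*) [Field k] [CharZero k] [Ring R]
    [Algebra k R]
    [AddCommGroup M] [Module k M] [Module R M] [IsScalarTower k R M] [FiniteDimensional k M]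
    [AddCommGroup N] [Module k N] [Module R N] [IsScalarTower k R N] [FiniteDimensional k N]
    [IsSemisimpleModule R M] [IsSemisimpleModule R N]
    (h : ∀ x : R, traceOfSMul k (M := M) x = traceOfSMul k (M := N) x) :
    Nonempty (M ≃ₗ[R] N) := by
  induction hd : finrank k M using Nat.strong_induction_on generalizing M N with
  | _ d ih =>
  rcases subsingleton_or_nontrivial M with hM | hM
  · have : Subsingleton N := finrank_zero_iff.mp <|
      (finrank_eq_of_traceOfSMul_eq k h).symm.trans finrank_zero_of_subsingleton
    exact ⟨.ofSubsingleton M N⟩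
  obtain ⟨S, hS⟩ := IsSemisimpleModule.exists_simple_submodule R M
  have := IsSimpleModule.nontrivial R S
  obtain ⟨T, ⟨e⟩⟩ := exists_submodule_linearEquiv_of_traceOfSMul_eq k h S
  obtain ⟨S', hSS'⟩ := exists_isCompl S
  obtain ⟨T', hTT'⟩ := exists_isCompl T
  have h' (x : R) : traceOfSMul k (M := S') x = traceOfSMul k (M := T') x := add_left_cancel <| by
    rw [← traceOfSMul_eq_add_of_isCompl k hSS', h, traceOfSMul_eq_add_of_isCompl k hTT',
      traceOfSMul_congr k e]
  have hlt : finrank k S' < d := by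
    rw [← hd, ← finrank_add_finrank_of_isCompl k hSS']
    exact Nat.lt_add_of_pos_left finrank_pos
  obtain ⟨e'⟩ := ih _ hlt S' T' h' rfl
  exact ⟨(prodEquivOfIsCompl S S' hSS').symm ≪≫ₗ e.prodCongr e' ≪≫ₗ prodEquivOfIsCompl T T' hTT'⟩
end

section
/- Let k be a field, let R be a k-algebra, and let V₀, V₁, …, Vₙ be pairwise non-isomorphic simple R-modules, each finite-dimensional as a k-vector space. Then there exists an element e ∈ R such that e acts as the identity on V₀ (that is, e • v = v for all v ∈ V₀) and e acts as zero on each Vᵢ for 1 ≤ i ≤ n (that is, e • v = 0 for all v ∈ Vᵢ). -/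
/-!
Put `M = ∏ i, V i`. By Schur's lemma there are no nonzero maps between distinct factors, so every
`R`-endomorphism of `M` is diagonal and hence commutes with the projection onto the factor `V i₀`.
Since `M` is semisimple and finite over `k`, hence over `End_R M`, the Jacobson density theorem
realizes this projection as the action of some `r ∈ R`.
-/

open Module (End)

section

variable {R ι : Type*} [Ring R] {V : ι → Type*}
  [∀ i, AddCommGroup (V i)] [∀ i, Module R (V i)]

theorem LinearMap.eq_zero_of_isEmpty_linearEquiv [∀ i, IsSimpleModule R (V i)] {i j : ι}
    (h : IsEmpty (V i ≃ₗ[R] V j)) (f : V i →ₗ[R] V j) : f = 0 :=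
  f.bijective_or_eq_zero.resolve_left fun hf ↦ h.false (.ofBijective f hf)

variable [DecidableEq ι] (hHom : ∀ i j, i ≠ j → ∀ f : V i →ₗ[R] V j, f = 0)
include hHom

theorem Module.End.pi_apply_single_of_ne (φ : End R (∀ i, V i)) {i j : ι} (hij : i ≠ j)
    (v : V i) : φ (Pi.single i v) j = 0 := by
  simpa using congr($(hHom i j hij (.proj j ∘ₗ φ ∘ₗ .single R V i)) v)

theorem Module.End.map_pi_single_apply [Fintype ι] (φ : End R (∀ i, V i)) (m : ∀ i, V i)
    (i : ι) : φ (Pi.single i (m i)) = Pi.single i (φ m i) := by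
  ext j
  obtain rfl | hij := eq_or_ne i j
  · conv_rhs => rw [← Finset.univ_sum_single m, map_sum, Finset.sum_apply]
    rw [Pi.single_eq_same, Finset.sum_eq_single i
      (fun k _ hk ↦ φ.pi_apply_single_of_ne hHom hk _) (by simp)]
  · rw [φ.pi_apply_single_of_ne hHom hij, Pi.single_eq_of_ne' hij]

def piSingleProj [Fintype ι] (i : ι) : End (End R (∀ i, V i)) (∀ i, V i) where
  toFun m := Pi.single i (m i)
  map_add' m m' := Pi.single_add i (m i) (m' i)
  map_smul' φ m := (φ.map_pi_single_apply hHom m i).symm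

theorem exists_smul_eq_pi_single [Fintype ι] [IsSemisimpleModule R (∀ i, V i)]
    [Module.Finite (End R (∀ i, V i)) (∀ i, V i)] (i : ι) :
    ∃ r : R, ∀ m : ∀ i, V i, r • m = Pi.single i (m i) := by
  obtain ⟨r, hr⟩ := Module.Finite.toModuleEnd_moduleEnd_surjective (piSingleProj hHom i)
  exact ⟨r, fun m ↦ congr($hr m)⟩

end

theorem exists_smul_eq_id_and_eq_zero {k R ι : Type*} [CommSemiring k] [Ring R] [Algebra k R]
    [Fintype ι] {V : ι → Type*} [∀ i, AddCommGroup (V i)] [∀ i, Module k (V i)]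
    [∀ i, Module R (V i)] [∀ i, IsScalarTower k R (V i)] [∀ i, Module.Finite k (V i)]
    [∀ i, IsSimpleModule R (V i)] (hV : ∀ i j, i ≠ j → IsEmpty (V i ≃ₗ[R] V j)) (i₀ : ι) :
    ∃ r : R, (∀ v : V i₀, r • v = v) ∧ ∀ i ≠ i₀, ∀ v : V i, r • v = 0 := by
  classical
  have : Module.Finite (End R (∀ i, V i)) (∀ i, V i) :=
    .of_restrictScalars_finite k _ _
  obtain ⟨r, hr⟩ := exists_smul_eq_pi_single
    (fun i j hij ↦ LinearMap.eq_zero_of_isEmpty_linearEquiv (hV i j hij)) i₀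
  refine ⟨r, fun v ↦ by simpa using congr_fun (hr (Pi.single i₀ v)) i₀, fun i hi v ↦ ?_⟩
  simpa [hi] using congr_fun (hr (Pi.single i v)) i

/-- Given pairwise non-isomorphic simple modules `V 0, V 1, …, V n` over a
`k`-algebra `R`, each finite-dimensional over `k`, there is an element `e ∈ R` acting as the
identity on `V 0` and as zero on each `V i`, `i ≠ 0`. -/
theorem exists_projector (k R : Type*) [Field k] [Ring R] [Algebra k R]
    (n : ℕ) (V : Fin (n + 1) → Type*)
    [∀ i, AddCommGroup (V i)] [∀ i, Module k (V i)] [∀ i, Module R (V i)]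
    [∀ i, IsScalarTower k R (V i)] [∀ i, FiniteDimensional k (V i)]
    [∀ i, IsSimpleModule R (V i)]
    (hV : ∀ i j : Fin (n + 1), i ≠ j → IsEmpty (V i ≃ₗ[R] V j)) :
    ∃ e : R, (∀ v : V 0, e • v = v) ∧ ∀ i : Fin (n + 1), i ≠ 0 → ∀ v : V i, e • v = 0 :=
  exists_smul_eq_id_and_eq_zero (k := k) hV 0
end

section
/- Let k be a field of characteristic zero and let R be a finite-dimensional k-algebra. Then the Jacobson radical of R equals the kernel of the trace bilinear form: an element x ∈ R lies in the Jacobson radical of R if and only if tr_{R/k}(x·y) = 0 for every y ∈ R. -/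
/-!
The Jacobson radical of the Artinian ring `R` is a nilpotent two-sided ideal, so `x * y` is
nilpotent for `x` in it, and nilpotent endomorphisms are traceless. Conversely, if `x` lies in the
kernel of the trace form, then so does `y * x` (the trace form is symmetric), and the trace of
every power of left multiplication by `y * x` vanishes; in characteristic zero this forces `y * x`
to be nilpotent, so `1 + y * x` is a unit for every `y`, i.e. `x` is in the Jacobson radical.

To see that an endomorphism `f` whose positive powers are all traceless is nilpotent, write
its characteristic polynomial as `X ^ m * q` with `q(0) ≠ 0`. Bézout for the coprime pair `X ^ (m + 1)`, `q` yields an idempotent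
`e = a(f) * f ^ (m + 1)` which is traceless, being a polynomial in `f` without constant term;
in characteristic zero the trace of an idempotent is its rank, so `e = 0` and then
`f ^ (m + 1) = f ^ (m + 1) * e = 0`.
-/

open Polynomial

namespace LinearMap

theorem trace_mulLeft_mul_comm (R : Type*) {A : Type*} [CommSemiring R] [Semiring A]
    [Algebra R A] (a b : A) :
    trace R A (mulLeft R (a * b)) = trace R A (mulLeft R (b * a)) := by
  simp only [mulLeft_mul, ← Module.End.mul_eq_comp]
  exact trace_mul_comm R _ _

theorem trace_aeval_X_mul_eq_zero {R M : Type*} [CommSemiring R] [AddCommMonoid M] [Module R M]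
    {f : Module.End R M} (h : ∀ n : ℕ, trace R M (f ^ (n + 1)) = 0) (p : R[X]) :
    trace R M (aeval f (X * p)) = 0 := by
  induction p using Polynomial.induction_on' with
  | add p q hp hq => rw [mul_add, map_add, map_add, hp, hq, add_zero]
  | monomial n a =>
    rw [X_mul_monomial, aeval_monomial, ← Algebra.smul_def, map_smul, h n, smul_zero]

theorem isNilpotent_of_forall_trace_pow_eq_zero_s8 {K V : Type*} [Field K] [CharZero K]
    [AddCommGroup V] [Module K V] [FiniteDimensional K V] {f : Module.End K V}
    (h : ∀ n : ℕ, trace K V (f ^ (n + 1)) = 0) : IsNilpotent f := by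
  obtain ⟨q, hχ, hXq⟩ :=
    exists_eq_pow_rootMultiplicity_mul_and_not_dvd f.charpoly f.charpoly_monic.ne_zero 0
  rw [C_0, sub_zero] at hχ hXq
  set m := rootMultiplicity 0 f.charpoly
  obtain ⟨a, b, hab⟩ : IsCoprime (X ^ (m + 1)) q :=
    ((irreducible_X.coprime_iff_not_dvd).mpr hXq).pow_left
  have hχf : aeval f (X ^ m * q) = 0 := hχ ▸ aeval_self_charpoly f
  have he : IsIdempotentElem (aeval f (a * X ^ (m + 1))) := by
    have : a * X ^ (m + 1) * (a * X ^ (m + 1)) = a * X ^ (m + 1) - a * b * X * (X ^ m * q) := by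
      linear_combination (a * X ^ (m + 1)) * hab
    rw [IsIdempotentElem, ← map_mul, this, map_sub, map_mul (aeval f) (a * b * X), hχf, mul_zero,
      sub_zero]
  have he_zero : aeval f (a * X ^ (m + 1)) = 0 := by
    refine IsIdempotentElem.eq_zero_of_trace_eq_zero he ?_
    rw [show a * X ^ (m + 1) = X * (a * X ^ m) by ring]
    exact trace_aeval_X_mul_eq_zero h _
  have : X ^ (m + 1) = X ^ (m + 1) * (a * X ^ (m + 1)) + b * X * (X ^ m * q) := by
    linear_combination (-X ^ (m + 1)) * hab
  refine ⟨m + 1, ?_⟩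
  rw [← aeval_X_pow (R := K), this, map_add, map_mul, map_mul (aeval f) (b * X), hχf, he_zero,
    mul_zero, mul_zero, add_zero]

end LinearMap

namespace Ring

variable {R : Type*} [Ring R] {x : R}

theorem isNilpotent_of_mem_jacobson [IsSemiprimaryRing R] (hx : x ∈ jacobson R) :
    IsNilpotent x := by
  obtain ⟨n, hn⟩ := IsSemiprimaryRing.isNilpotent (R := R)
  exact ⟨n, by simpa [hn] using Ideal.pow_mem_pow hx n⟩

theorem mem_jacobson_of_forall_isNilpotent_mul (h : ∀ y, IsNilpotent (y * x)) :
    x ∈ jacobson R := by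
  rw [← Ideal.jacobson_bot, Ideal.mem_jacobson_iff]
  intro y
  obtain ⟨u, hu⟩ := (h y).isUnit_add_one
  refine ⟨↑u⁻¹, ?_⟩
  rw [Ideal.mem_bot, mul_assoc, sub_eq_zero, ← mul_add_one (↑u⁻¹ : R), ← hu, Units.inv_mul]

end Ring

/-- For a finite-dimensional algebra `R` over a field `k` of characteristic
zero, the Jacobson radical of `R` (the intersection of the maximal left ideals of `R`) is the
kernel of the trace form: `x` lies in the Jacobson radical iff `tr_{R/k}(x·y) = 0` for all `y`,
where `tr_{R/k}(z)` is the trace of left multiplication by `z` on `R`. -/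
theorem mem_jacobson_iff_trace_form (k R : Type*) [Field k] [CharZero k] [Ring R] [Algebra k R]
    [FiniteDimensional k R] (x : R) :
    x ∈ sInf {I : Ideal R | I.IsMaximal} ↔
      ∀ y : R, LinearMap.trace k R (LinearMap.mulLeft k (x * y)) = 0 := by
  have : IsArtinianRing R := .of_finite k R
  rw [← Ring.jacobson_eq_sInf_isMaximal]
  constructor
  · intro hx y
    have hxy : IsNilpotent (x * y) :=
      Ring.isNilpotent_of_mem_jacobson (Ideal.mul_mem_right y _ hx)
    rw [← LinearMap.isNilpotent_mulLeft_iff k] at hxy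
    exact (LinearMap.isNilpotent_trace_of_isNilpotent hxy).eq_zero
  · intro h
    refine Ring.mem_jacobson_of_forall_isNilpotent_mul fun y => ?_
    rw [← LinearMap.isNilpotent_mulLeft_iff k]
    refine LinearMap.isNilpotent_of_forall_trace_pow_eq_zero_s8 fun n => ?_
    rw [LinearMap.pow_mulLeft, pow_succ, ← mul_assoc, LinearMap.trace_mulLeft_mul_comm]
    exact h _
end

section
/- Let k be a field of characteristic zero, let A be a commutative k-algebra, and let R be a (possibly non-commutative) A-algebra that is free of finite rank n as an A-module, with A-basis b₁, …, bₙ. Let d = det((tr_{R/A}(bᵢ·bⱼ))₁≤i,j≤n) ∈ A be the discriminant of this basis. Let K be a field and χ : A → K a ring homomorphism, and equip K with the A-algebra structure given by χ. Then the Jacobson radical of the K-algebra K ⊗_A R is zero (equivalently, K ⊗_A R is a semisimple K-algebra) if and only if χ(d) ≠ 0 in K. -/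
/-!
Base change identifies `χ(d)` with the determinant of the Gram matrix of the trace form
`(x, y) ↦ Tr(xy)` of `S = K ⊗[A] R` in the basis `1 ⊗ bᵢ`, so it suffices to show that a
finite-dimensional algebra `S` over a field of characteristic zero has zero Jacobson radical iff
its trace form is nondegenerate. The radical of an Artinian ring is nilpotent and nilpotent
elements have trace zero, so the radical lies in the kernel of the trace form. Conversely, if
`S` is semisimple, the kernel of the trace form, a left ideal, is generated by an idempotent `e`;
the trace of `x ↦ ex` is the rank of this projection, which vanishes in characteristic zero only
when `e = 0`.
-/

open scoped TensorProduct
open LinearMap (BilinForm)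

theorem IsArtinianRing.isNilpotent_of_mem_jacobson {S : Type*} [Ring S] [IsArtinianRing S]
    {x : S} (hx : x ∈ Ring.jacobson S) : IsNilpotent x := by
  obtain ⟨m, hm⟩ := IsArtinianRing.isNilpotent_jacobson_bot (R := S)
  refine ⟨m, ?_⟩
  have := Ideal.pow_mem_pow (Ideal.jacobson_bot (R := S) ▸ hx) m
  rwa [hm, Ideal.zero_eq_bot, Ideal.mem_bot] at this

namespace Algebra

section Ring

variable (R S : Type*) [CommRing R] [Ring S] [Algebra R S]

/-- The analogue of `Algebra.trace`, which needs `S` to be commutative. -/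
noncomputable def lmulTrace : S →ₗ[R] R :=
  LinearMap.trace R S ∘ₗ (Algebra.lmul R S).toLinearMap

noncomputable def lmulTraceForm : BilinForm R S :=
  (LinearMap.mul R S).compr₂ (lmulTrace R S)

variable {R S}

theorem lmulTrace_apply (x : S) : lmulTrace R S x = LinearMap.trace R S (LinearMap.mulLeft R x) :=
  rfl

theorem lmulTraceForm_apply (x y : S) : lmulTraceForm R S x y = lmulTrace R S (x * y) :=
  rfl

theorem lmulTrace_eq_zero_of_isNilpotent [IsReduced R] {x : S} (hx : IsNilpotent x) :
    lmulTrace R S x = 0 :=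
  (LinearMap.isNilpotent_trace_of_isNilpotent (hx.map (Algebra.lmul R S))).eq_zero

theorem lmulTraceForm_toMatrix {ι : Type*} [Fintype ι] [DecidableEq ι]
    (b : Module.Basis ι R S) :
    LinearMap.BilinForm.toMatrix b (lmulTraceForm R S) =
      Matrix.of fun i j => LinearMap.trace R S (LinearMap.mulLeft R (b i * b j)) := by
  ext i j
  rw [LinearMap.BilinForm.toMatrix_apply, lmulTraceForm_apply, lmulTrace_apply, Matrix.of_apply]

theorem lmulTrace_one_tmul [Module.Free R S] [Module.Finite R S] (A : Type*) [CommRing A]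
    [Algebra R A] (x : S) :
    lmulTrace A (A ⊗[R] S) (1 ⊗ₜ x) = algebraMap R A (lmulTrace R S x) := by
  rw [lmulTrace, LinearMap.comp_apply, AlgHom.toLinearMap_apply, ← Algebra.baseChange_lmul,
    LinearMap.trace_baseChange]
  rfl

theorem lmulTraceForm_toMatrix_baseChange [Module.Free R S] [Module.Finite R S] (A : Type*)
    [CommRing A] [Algebra R A] {ι : Type*} [Fintype ι] [DecidableEq ι]
    (b : Module.Basis ι R S) :
    LinearMap.BilinForm.toMatrix (Algebra.TensorProduct.basis A b)
        (lmulTraceForm A (A ⊗[R] S)) =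
      (LinearMap.BilinForm.toMatrix b (lmulTraceForm R S)).map (algebraMap R A) := by
  ext i j
  simp only [LinearMap.BilinForm.toMatrix_apply, Matrix.map_apply,
    Algebra.TensorProduct.basis_apply, lmulTraceForm_apply, Algebra.TensorProduct.tmul_mul_tmul,
    one_mul, lmulTrace_one_tmul]

variable (R S) in
def lmulTraceRadical : Ideal S where
  carrier := {x | ∀ y, lmulTraceForm R S y x = 0}
  add_mem' hx hx' y := by rw [map_add, hx y, hx' y, add_zero]
  zero_mem' _ := map_zero _
  smul_mem' c x hx y := by rw [smul_eq_mul, lmulTraceForm_apply, ← mul_assoc]; exact hx (y * c)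

end Ring

section FiniteDimensional

variable {K S : Type*} [Field K] [Ring S] [Algebra K S] [FiniteDimensional K S]

theorem _root_.IsIdempotentElem.eq_zero_of_lmulTrace_eq_zero [CharZero K] {e : S}
    (he : IsIdempotentElem e) (h : lmulTrace K S e = 0) : e = 0 :=
  Algebra.lmul_injective (R := K) <| by
    rw [map_zero]
    exact LinearMap.IsIdempotentElem.eq_zero_of_trace_eq_zero (he.map (Algebra.lmul K S)) h

theorem lmulTraceForm_eq_zero_of_mem_jacobson {x : S} (hx : x ∈ Ring.jacobson S) (y : S) :
    lmulTraceForm K S y x = 0 :=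
  have := IsArtinianRing.of_finite K S
  lmulTrace_eq_zero_of_isNilpotent <|
    IsArtinianRing.isNilpotent_of_mem_jacobson <| (Ring.jacobson S).mul_mem_left y hx

theorem jacobson_eq_bot_of_lmulTraceForm_separatingRight
    (h : (lmulTraceForm K S).SeparatingRight) : Ring.jacobson S = ⊥ :=
  eq_bot_iff.mpr fun x hx => h x (lmulTraceForm_eq_zero_of_mem_jacobson hx)

theorem lmulTraceForm_separatingRight [CharZero K] [IsSemisimpleRing S] :
    (lmulTraceForm K S).SeparatingRight := by
  obtain ⟨e, he, hspan⟩ := IsSemisimpleRing.ideal_eq_span_idempotent (lmulTraceRadical K S)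
  have he_mem : e ∈ lmulTraceRadical K S := hspan ▸ Ideal.subset_span rfl
  have he0 : e = 0 :=
    he.eq_zero_of_lmulTrace_eq_zero (K := K) (by simpa [lmulTraceForm_apply] using he_mem 1)
  intro x hx
  have hx_mem : x ∈ lmulTraceRadical K S := hx
  rwa [hspan, he0, Ideal.span_singleton_eq_bot.mpr rfl, Ideal.mem_bot] at hx_mem

variable (K) in
theorem jacobson_eq_bot_iff_lmulTraceForm_nondegenerate [CharZero K] :
    Ring.jacobson S = ⊥ ↔ (lmulTraceForm K S).Nondegenerate := by
  have := IsArtinianRing.of_finite K S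
  refine ⟨fun h => .ofSeparatingRight ?_,
    fun h => jacobson_eq_bot_of_lmulTraceForm_separatingRight h.2⟩
  have := IsArtinianRing.isSemisimpleRing_iff_jacobson.mpr h
  exact lmulTraceForm_separatingRight

end FiniteDimensional

end Algebra

/-- Let `A` be a commutative algebra over a characteristic-zero field `k`, and
`R` a (possibly non-commutative) `A`-algebra that is free of finite rank `n` over `A`, with
basis `b`. Let `d` be the discriminant of this basis. For any field `K` equipped with an
`A`-algebra structure `χ = algebraMap A K`, the Jacobson radical (intersection of maximal left
ideals) of `K ⊗[A] R` is zero iff `χ(d) ≠ 0`. -/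
theorem jacobson_eq_bot_iff_discr_ne_zero (k A R K : Type*) [Field k] [CharZero k]
    [CommRing A] [Algebra k A] [Ring R] [Algebra A R] [Field K] [Algebra A K]
    (n : ℕ) (b : Module.Basis (Fin n) A R) :
    sInf {I : Ideal (K ⊗[A] R) | I.IsMaximal} = ⊥ ↔
      algebraMap A K
        (Matrix.det (Matrix.of fun i j : Fin n =>
          LinearMap.trace A R (LinearMap.mulLeft A (b i * b j)))) ≠ 0 := by
  have : CharZero K :=
    charZero_of_injective_ringHom ((algebraMap A K).comp (algebraMap k A)).injective
  have : Module.Free A R := .of_basis b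
  have : Module.Finite A R := .of_basis b
  let bK := Algebra.TensorProduct.basis K b
  have : FiniteDimensional K (K ⊗[A] R) := .of_basis bK
  rw [← Ring.jacobson_eq_sInf_isMaximal,
    Algebra.jacobson_eq_bot_iff_lmulTraceForm_nondegenerate K,
    LinearMap.BilinForm.nondegenerate_iff_det_ne_zero bK,
    Algebra.lmulTraceForm_toMatrix_baseChange, Algebra.lmulTraceForm_toMatrix, RingHom.map_det]
  rfl
end

section
/- Let A be a commutative ring, let B be a commutative A-algebra that is free of finite rank m as an A-module with A-basis (b₁, …, b_m), and let C be a commutative B-algebra that is free of finite rank n as a B-module with B-basis (c₁, …, cₙ) (so that C is free of rank mn as an A-module with basis (bᵢcⱼ)). Then the discriminant of the A-basis (bᵢcⱼ) of C equals the n-th power of the discriminant of the A-basis (bᵢ) of B times the norm from B to A of the discriminant of the B-basis (cⱼ) of C: det((tr_{C/A}(bᵢcⱼ · b_k c_l))) = det((tr_{B/A}(bᵢ·b_k)))ⁿ · N_{B/A}(det((tr_{C/B}(cⱼ·c_l)))). -/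
/-!
By transitivity of the trace, `Tr_{C/A}(bᵢcⱼ · b_k c_l) = Tr_{B/A}(bᵢ b_k · Tr_{C/B}(cⱼ c_l))`.
Expanding `b_k · Tr_{C/B}(cⱼ c_l)` in the basis `b` shows that the trace matrix of `(bᵢcⱼ)`
is the block-diagonal matrix with `n` copies of the trace matrix of `b`, times the block
matrix whose `(j, l)` block is the matrix of multiplication by `Tr_{C/B}(cⱼ c_l)`. The blocks of
the second factor commute, so by Silvester's theorem (`Matrix.det_det`) its determinant is the
determinant of multiplication by `det (Tr_{C/B}(cⱼ c_l))`, i.e. the norm of the discriminant of `c`.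
-/

open Matrix Module

theorem LinearMap.trace_mulLeft_eq_trace {R S : Type*} [CommRing R] [CommRing S] [Algebra R S]
    (z : S) :
    LinearMap.trace R S (LinearMap.mulLeft R z) = Algebra.trace R S z :=
  rfl

theorem LinearMap.det_mulLeft_eq_norm {R S : Type*} [CommRing R] [Ring S] [Algebra R S] (z : S) :
    LinearMap.det (LinearMap.mulLeft R z) = Algebra.norm R z :=
  rfl

namespace Algebra

variable {A B C : Type*} [CommRing A] [CommRing B] [CommRing C]
  [Algebra A B] [Algebra B C] [Algebra A C] [IsScalarTower A B C]
  {ι κ : Type*} [Fintype ι] [Fintype κ] [DecidableEq ι] [DecidableEq κ]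

theorem traceMatrix_smulTower (b : Basis ι A B) (c : Basis κ B C) :
    traceMatrix A (b.smulTower c) =
      blockDiagonal (fun _ : κ => traceMatrix A b) *
        reindex (Equiv.prodComm κ ι) (Equiv.prodComm κ ι)
          (comp κ κ ι ι A ((traceMatrix B c).map (leftMulMatrix b))) := by
  ext ⟨i, j⟩ ⟨k, l⟩
  have hmulVec := congrFun (traceMatrix_of_basis_mulVec b (trace B C (c j * c l) * b k)) i
  simp only [mulVec, dotProduct, Basis.equivFun_apply, traceMatrix_apply,
    traceForm_apply] at hmulVec
  simp only [traceMatrix_apply, traceForm_apply, Basis.smulTower_apply, mul_apply,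
    Fintype.sum_prod_type, blockDiagonal_apply, ite_mul, zero_mul, Finset.sum_ite_eq,
    Finset.mem_univ, if_true, reindex_apply, submatrix_apply, Equiv.prodComm_symm,
    Equiv.prodComm_apply, Prod.swap_prod_mk, comp_apply, map_apply, leftMulMatrix_eq_repr_mul]
  rw [hmulVec, ← trace_trace_of_basis b c, smul_mul_smul_comm, map_smul, smul_eq_mul]
  congr 1
  ring

theorem discr_smulTower (b : Basis ι A B) (c : Basis κ B C) :
    discr A (b.smulTower c) = discr A b ^ Fintype.card κ * norm A (discr B c) := by
  rw [discr_def, traceMatrix_smulTower, det_mul, det_blockDiagonal, Finset.prod_const,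
    Finset.card_univ, det_reindex_self, norm_eq_matrix_det b, discr_def]
  exact congrArg _ (det_det (traceMatrix B c) (leftMulMatrix b).toRingHom).symm

end Algebra

/-- For a tower `A → B → C` of commutative rings with `B` free of rank `m`
over `A` with basis `b` and `C` free of rank `n` over `B` with basis `c`, the discriminant of
the `A`-basis `(bᵢ cⱼ)` of `C` equals the `n`-th power of the discriminant of `b` times the
norm from `B` to `A` of the discriminant of `c`. -/
theorem discr_tower (A B C : Type*) [CommRing A] [CommRing B] [CommRing C]
    [Algebra A B] [Algebra B C] [Algebra A C] [IsScalarTower A B C]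
    (m n : ℕ) (b : Module.Basis (Fin m) A B) (c : Module.Basis (Fin n) B C) :
    Matrix.det (Matrix.of fun p q : Fin m × Fin n =>
        LinearMap.trace A C (LinearMap.mulLeft A
          ((algebraMap B C (b p.1) * c p.2) * (algebraMap B C (b q.1) * c q.2)))) =
      Matrix.det (Matrix.of fun i k : Fin m =>
          LinearMap.trace A B (LinearMap.mulLeft A (b i * b k))) ^ n *
        LinearMap.det (LinearMap.mulLeft A
          (Matrix.det (Matrix.of fun j l : Fin n =>
            LinearMap.trace B C (LinearMap.mulLeft B (c j * c l))))) := by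
  simp only [LinearMap.trace_mulLeft_eq_trace, LinearMap.det_mulLeft_eq_norm]
  simpa only [Algebra.discr_def, Algebra.traceMatrix, Algebra.traceForm_apply,
    Basis.smulTower_apply, Algebra.smul_def, Fintype.card_fin] using Algebra.discr_smulTower b c
end

section
/- Let k be a field of characteristic zero, let R be a k-algebra, let M be a simple R-module that is finite-dimensional as a k-vector space, and let r ∈ R. Then r annihilates M (that is, r • m = 0 for all m ∈ M) if and only if tr_M(s·r) = 0 for every s ∈ R. -/
/-!
If `r • m ≠ 0` for some `m`, simplicity gives `s` with `(s * r) • m = m`, so `s * r` acts by a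
non-nilpotent endomorphism. Yet every power `(s * r) ^ (n + 1) = ((s * r) ^ n * s) * r` has
trace zero, and in characteristic zero this forces nilpotency: a non-nilpotent endomorphism has a
nonzero idempotent `p(f)` with `p(0) = 0`, whose trace is its rank.
-/

open Polynomial

theorem IsIntegral.exists_isIdempotentElem_aeval_X_mul {k A : Type*} [Field k] [Ring A]
    [Algebra k A] {a : A} (ha : IsIntegral k a) (hnil : ¬IsNilpotent a) :
    ∃ p : k[X], IsIdempotentElem (aeval a (X * p)) ∧ aeval a (X * p) ≠ 0 := by
  obtain ⟨q, hμ, hXq⟩ := exists_eq_pow_rootMultiplicity_mul_and_not_dvd _ (minpoly.ne_zero ha) 0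
  set n := rootMultiplicity 0 (minpoly k a)
  rw [map_zero, sub_zero] at hμ hXq
  obtain ⟨u, v, huv⟩ : IsCoprime (X ^ (n + 1) : k[X]) q :=
    (irreducible_X.coprime_iff_not_dvd.mpr hXq).pow_left
  -- The Bézout identity splits `1` into `(u X^(n+1))(a) + (v q)(a)`, two orthogonal idempotents.
  have hsum : aeval a (u * X ^ (n + 1)) + aeval a (v * q) = 1 := by
    rw [← map_add, huv, map_one]
  have horth : aeval a (u * X ^ (n + 1)) * aeval a (v * q) = 0 := by
    rw [← map_mul, show u * X ^ (n + 1) * (v * q) = u * v * X * minpoly k a by rw [hμ]; ring,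
      map_mul, minpoly.aeval, mul_zero]
  refine ⟨u * X ^ n, ?_, ?_⟩
  all_goals rw [show X * (u * X ^ n) = u * X ^ (n + 1) by ring]
  · rw [eq_sub_of_add_eq' hsum, mul_one_sub, sub_eq_zero] at horth
    exact horth.symm
  · intro he
    rw [he, zero_add] at hsum
    refine hnil ⟨n, ?_⟩
    calc a ^ n = aeval a (X ^ n * (v * q)) := by rw [map_mul, hsum, mul_one, map_pow, aeval_X]
      _ = 0 := by
        rw [show X ^ n * (v * q) = v * minpoly k a by rw [hμ]; ring, map_mul, minpoly.aeval,
          mul_zero]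

theorem Module.End.isNilpotent_of_forall_trace_pow_succ_eq_zero {k V : Type*} [Field k]
    [CharZero k] [AddCommGroup V] [Module k V] [FiniteDimensional k V] (f : Module.End k V)
    (h : ∀ n : ℕ, LinearMap.trace k V (f ^ (n + 1)) = 0) : IsNilpotent f := by
  by_contra hnil
  obtain ⟨p, hidem, hne⟩ := (IsIntegral.of_finite k f).exists_isIdempotentElem_aeval_X_mul hnil
  refine hne (LinearMap.IsIdempotentElem.eq_zero_of_trace_eq_zero hidem ?_)
  rw [map_mul, aeval_X, aeval_eq_sum_range, Finset.mul_sum]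
  simp only [mul_smul_comm, ← pow_succ', map_sum, map_smul, h, smul_zero, Finset.sum_const_zero]

theorem Module.End.not_isNilpotent_of_apply_eq_self {R M : Type*} [Semiring R] [AddCommMonoid M]
    [Module R M] {f : Module.End R M} {m : M} (hm : m ≠ 0) (hfm : f m = m) : ¬IsNilpotent f := by
  rintro ⟨n, hn⟩
  apply hm
  rw [← Function.iterate_fixed hfm n, ← Module.End.pow_apply, hn, LinearMap.zero_apply]

/-- Let `M` be a simple module over a `k`-algebra `R`, finite-dimensional
over the characteristic-zero field `k`, and `r ∈ R`. Then `r` annihilates `M` iff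
`tr_M(s·r) = 0` for every `s ∈ R`. -/
theorem annihilates_iff_trace_eq_zero (k R M : Type*) [Field k] [CharZero k] [Ring R]
    [Algebra k R]
    [AddCommGroup M] [Module k M] [Module R M] [IsScalarTower k R M] [FiniteDimensional k M]
    [IsSimpleModule R M] (r : R) :
    (∀ m : M, r • m = 0) ↔ ∀ s : R, traceOfSMul k (M := M) (s * r) = 0 := by
  refine ⟨fun h s => ?_, fun h => ?_⟩
  · have : Algebra.lsmul k k M (s * r) = 0 := LinearMap.ext fun m => by simp [h m]
    exact (congrArg (LinearMap.trace k M) this).trans (map_zero _)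
  by_contra! ⟨m, hrm⟩
  obtain ⟨s, hs⟩ := IsSimpleModule.toSpanSingleton_surjective R hrm m
  have hnil : IsNilpotent (Algebra.lsmul k k M (s * r)) :=
    Module.End.isNilpotent_of_forall_trace_pow_succ_eq_zero _ fun n => by
      rw [← map_pow, pow_succ, ← mul_assoc]
      exact h _
  refine Module.End.not_isNilpotent_of_apply_eq_self (m := m) ?_ ?_ hnil
  · rintro rfl
    exact hrm (smul_zero r)
  · simpa [mul_smul] using hs
end
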